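/- arXiv:1711.05886 — 6 statements merged into one kernel-verified Lean document; each statement's English description precedes it below -/
import Mathlib

section
/- If τ : ℤ³ → F (F a field) is nowhere zero and satisfies the lattice AKP equation A·τ_{k+1,l,m}τ_{k,l+1,m+1} + B·τ_{k,l+1,m}τ_{k+1,l,m+1} + C·τ_{k,l,m+1}τ_{k+1,l+1,m} = 0 for all k,l,m, then the fourth conservation law holds: A(p_{k+1,l,m} − p_{k,l,m}) + B(q_{k,l+1,m} − q_{k,l,m}) + C(v_{k,l,m+1} − v_{k,l,m}) = 0 for all k,l,m, where p = τ_{k,l,m}τ_{k,l+1,m+1}/(τ_{k,l+1,m}τ_{k,l,m+1}), q = τ_{k,l,m}τ_{k+1,l,m+1}/(τ_{k+1,l,m}τ_{k,l,m+1}), v = τ_{k+1,l+1,m}τ_{k,l,m}/(τ_{k+1,l,m}τ_{k,l+1,m}). -/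
/-!
Both `A p + B q + C v` at `(k, l, m)` and its forward-shifted counterpart
`A p(k+1,l,m) + B q(k,l+1,m) + C v(k,l,m+1)` are, after clearing denominators, multiples of the
AKP expression at `(k, l, m)`: by `τ(k,l,m)` and by `τ(k+1,l+1,m+1)` respectively. Hence both
vanish, and so does their difference.
-/

namespace AKP

variable {F : Type*} [Field F] (A B C : F) (t : ℤ → ℤ → ℤ → F)

def equation (k l m : ℤ) : F :=
  A * (t (k+1) l m * t k (l+1) (m+1)) + B * (t k (l+1) m * t (k+1) l (m+1))
    + C * (t k l (m+1) * t (k+1) (l+1) m)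

def p (k l m : ℤ) : F := t k l m * t k (l+1) (m+1) / (t k (l+1) m * t k l (m+1))

def q (k l m : ℤ) : F := t k l m * t (k+1) l (m+1) / (t (k+1) l m * t k l (m+1))

def v (k l m : ℤ) : F := t (k+1) (l+1) m * t k l m / (t (k+1) l m * t k (l+1) m)

variable {t}

theorem density_eq (ht : ∀ k l m, t k l m ≠ 0) (k l m : ℤ) :
    A * p t k l m + B * q t k l m + C * v t k l m
      = t k l m * equation A B C t k l m / (t (k+1) l m * t k (l+1) m * t k l (m+1)) := by
  have := ht (k+1) l m; have := ht k (l+1) m; have := ht k l (m+1)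
  simp only [p, q, v, equation]
  field_simp

theorem shifted_density_eq (ht : ∀ k l m, t k l m ≠ 0) (k l m : ℤ) :
    A * p t (k+1) l m + B * q t k (l+1) m + C * v t k l (m+1)
      = t (k+1) (l+1) (m+1) * equation A B C t k l m
          / (t k (l+1) (m+1) * t (k+1) l (m+1) * t (k+1) (l+1) m) := by
  have := ht k (l+1) (m+1); have := ht (k+1) l (m+1); have := ht (k+1) (l+1) m
  simp only [p, q, v, equation]
  field_simp

theorem conservation_law (ht : ∀ k l m, t k l m ≠ 0)
    (hAKP : ∀ k l m, equation A B C t k l m = 0) (k l m : ℤ) :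
    A * (p t (k+1) l m - p t k l m) + B * (q t k (l+1) m - q t k l m)
      + C * (v t k l (m+1) - v t k l m) = 0 := by
  have hLower := density_eq A B C ht k l m
  have hUpper := shifted_density_eq A B C ht k l m
  rw [hAKP, mul_zero, zero_div] at hLower hUpper
  linear_combination hUpper - hLower

end AKP

theorem akp_fourth_conservation_law
    {F : Type*} [Field F] (A B C : F) (t : ℤ → ℤ → ℤ → F)
    (ht : ∀ k l m : ℤ, t k l m ≠ 0)
    (hAKP : ∀ k l m : ℤ,
      A * (t (k+1) l m * t k (l+1) (m+1)) + B * (t k (l+1) m * t (k+1) l (m+1))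
        + C * (t k l (m+1) * t (k+1) (l+1) m) = 0) :
    ∀ k l m : ℤ,
      let p : ℤ → ℤ → ℤ → F := fun k l m =>
        t k l m * t k (l+1) (m+1) / (t k (l+1) m * t k l (m+1))
      let q : ℤ → ℤ → ℤ → F := fun k l m =>
        t k l m * t (k+1) l (m+1) / (t (k+1) l m * t k l (m+1))
      let v : ℤ → ℤ → ℤ → F := fun k l m =>
        t (k+1) (l+1) m * t k l m / (t (k+1) l m * t k (l+1) m)
      A * (p (k+1) l m - p k l m) + B * (q k (l+1) m - q k l m)
        + C * (v k l (m+1) - v k l m) = 0 := by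
  exact AKP.conservation_law A B C ht hAKP
end

section
/- If τ : ℤ³ → F is nowhere zero and satisfies the dual AKP equation (with parameters a₁, a₂, a₃, a₄), then the difference equation a₁(û − ũ) + a₂(z̃ − ẑ) + a₃(w − ẇ) + a₄(v − v̇) = 0 holds at every lattice point, where u = τ̃·(τ̇ shifted down by one in k)/(ττ̇) = τ_{k+1,l,m}τ_{k-1,l,m+1}/(τ_{k,l,m}τ_{k,l,m+1}), z = τ_{k,l+1,m}τ_{k,l-1,m+1}/(τ_{k,l,m}τ_{k,l,m+1}), w = τ_{k,l,m+1}τ_{k+1,l+1,m-1}/(τ_{k+1,l,m}τ_{k,l+1,m}), v = τ_{k+1,l+1,m}τ_{k,l,m}/(τ_{k+1,l,m}τ_{k,l+1,m}). -/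
/-- The dual AKP quadrilinear 14-point lattice expression. -/
def dualAKP {F : Type*} [Field F] (a1 a2 a3 a4 : F) (t : ℤ → ℤ → ℤ → F)
    (k l m : ℤ) : F :=
    a1 * (t (k-1) (l+1) (m+1) * t (k+1) l m * t (k+1) l (m+1) * t (k+1) (l+1) m
        - t k l (m+1) * t k (l+1) m * t k (l+1) (m+1) * t (k+2) l m)
  + a2 * (t k (l+1) m * t k (l+1) (m+1) * t (k+1) (l-1) (m+1) * t (k+1) (l+1) m
        - t k l (m+1) * t k (l+2) m * t (k+1) l m * t (k+1) l (m+1))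
  + a3 * (t k l (m+1) * t k (l+1) (m+1) * t (k+1) l (m+1) * t (k+1) (l+1) (m-1)
        - t k l (m+2) * t k (l+1) m * t (k+1) l m * t (k+1) (l+1) m)
  + a4 * (t k l m * t k (l+1) (m+1) * t (k+1) l (m+1) * t (k+1) (l+1) m
        - t k l (m+1) * t k (l+1) m * t (k+1) l m * t (k+1) (l+1) (m+1))

variable {F : Type*} [Field F]

/-- u = tau_{k+1,l,m} tau_{k-1,l,m+1} / (tau_{k,l,m} tau_{k,l,m+1}) -/
def uu (t : ℤ → ℤ → ℤ → F) (k l m : ℤ) : F :=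
  t (k+1) l m * t (k-1) l (m+1) / (t k l m * t k l (m+1))

/-- z = tau_{k,l+1,m} tau_{k,l-1,m+1} / (tau_{k,l,m} tau_{k,l,m+1}) -/
def zz (t : ℤ → ℤ → ℤ → F) (k l m : ℤ) : F :=
  t k (l+1) m * t k (l-1) (m+1) / (t k l m * t k l (m+1))

/-- w = tau_{k,l,m+1} tau_{k+1,l+1,m-1} / (tau_{k+1,l,m} tau_{k,l+1,m}) -/
def ww (t : ℤ → ℤ → ℤ → F) (k l m : ℤ) : F :=
  t k l (m+1) * t (k+1) (l+1) (m-1) / (t (k+1) l m * t k (l+1) m)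

/-- v = tau_{k+1,l+1,m} tau_{k,l,m} / (tau_{k+1,l,m} tau_{k,l+1,m}) -/
def vv (t : ℤ → ℤ → ℤ → F) (k l m : ℤ) : F :=
  t (k+1) (l+1) m * t k l m / (t (k+1) l m * t k (l+1) m)

/-! Multiplying the conservation law by the common denominator
`τ_{k+1,l,m} τ_{k+1,l,m+1} τ_{k,l+1,m} τ_{k,l+1,m+1}` of its eight terms turns it, term by
term, into the dual AKP expression at `(k, l, m)`. -/

theorem conservation_law_mul_eq_dualAKP (a1 a2 a3 a4 : F) (t : ℤ → ℤ → ℤ → F) (k l m : ℤ)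
    (h₁ : t (k+1) l m ≠ 0) (h₂ : t (k+1) l (m+1) ≠ 0)
    (h₃ : t k (l+1) m ≠ 0) (h₄ : t k (l+1) (m+1) ≠ 0) :
    (a1 * (uu t k (l+1) m - uu t (k+1) l m)
        + a2 * (zz t (k+1) l m - zz t k (l+1) m)
        + a3 * (ww t k l m - ww t k l (m+1))
        + a4 * (vv t k l m - vv t k l (m+1)))
      * (t (k+1) l m * t (k+1) l (m+1) * t k (l+1) m * t k (l+1) (m+1))
      = dualAKP a1 a2 a3 a4 t k l m := by
  simp only [uu, zz, ww, vv, dualAKP, add_sub_cancel_right, add_assoc, one_add_one_eq_two]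
  field_simp

theorem dualAKP_third_conservation_law (a1 a2 a3 a4 : F) (t : ℤ → ℤ → ℤ → F)
    (ht : ∀ k l m : ℤ, t k l m ≠ 0)
    (hD : ∀ k l m : ℤ, dualAKP a1 a2 a3 a4 t k l m = 0) :
    ∀ k l m : ℤ,
      a1 * (uu t k (l+1) m - uu t (k+1) l m)
        + a2 * (zz t (k+1) l m - zz t k (l+1) m)
        + a3 * (ww t k l m - ww t k l (m+1))
        + a4 * (vv t k l m - vv t k l (m+1)) = 0 := by
  intro k l m
  have hden : t (k+1) l m * t (k+1) l (m+1) * t k (l+1) m * t k (l+1) (m+1) ≠ 0 := by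
    simp only [ne_eq, mul_eq_zero, ht, or_self, not_false_eq_true]
  have hmul := (conservation_law_mul_eq_dualAKP a1 a2 a3 a4 t k l m
    (ht _ _ _) (ht _ _ _) (ht _ _ _) (ht _ _ _)).trans (hD k l m)
  exact (mul_eq_zero.mp hmul).resolve_right hden
end

section
/- The matrix conservation law holds as an algebraic identity: for any nowhere-zero τ : ℤ³ → F, P̃ − P + Q̂ − Q + Ṙ − R = Vᵀ·W, where P, Q, R are the explicit 3×4 matrices of quotients of shifted τ values given in the paper, V = (τ̂̇τ̃, τ̃̇τ̂, τ̂̃τ̇) is a row 3-vector, and W is the row 4-vector of AKP conservation-law characteristics W = ( τ_{k-1,l+1,m+1}/(τ̂̇τ̂τ̇) − τ_{k+2,l,m}/(τ̃τ̃̂τ̃̇), τ_{k+1,l-1,m+1}/(τ̃̇τ̃τ̇) − τ_{k,l+2,m}/(τ̂τ̂̇τ̃̂), τ_{k+1,l+1,m-1}/(τ̃̂τ̃τ̂) − τ_{k,l,m+2}/(τ̇τ̃̇τ̂̇), τ/(τ̃τ̂τ̇) − τ̃̂̇/(τ̃̂τ̂̇τ̃̇) ); here P̃, Q̂, Ṙ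 denote P, Q, R with all entries shifted by one unit in k, l, m respectively, and Vᵀ·W is the 3×4 outer product. -/
/-!
The rows of `P`, `Q`, `R` are related by `R₁ = -Q₁`, `R₂ = -P₂` and `Q₃ = -P₃`, so, once these
cancel and the zero entries drop out, every entry of the left-hand side is a difference of two
quotients of shifted values of `τ`, and these are `Vᵢ` times the two terms of `Wⱼ`. The law is
thus an identity of rational functions in the values of `τ`, checked entrywise after clearing
the nonzero denominators; no equation on `τ` (such as the AKP equation) enters.
-/

variable {F : Type*} [Field F]

/-- The matrix P of the matrix conservation law. -/
def matP (t : ℤ → ℤ → ℤ → F) (k l m : ℤ) : Matrix (Fin 3) (Fin 4) F :=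
  !![ -(t (k+1) l m * t (k-1) (l+1) (m+1)) / (t k (l+1) m * t k l (m+1)), 0, 0,
      -(t k l m * t k (l+1) (m+1)) / (t k (l+1) m * t k l (m+1));
      -(t (k+1) l m * t (k-1) (l+1) m) / (t k (l+1) m * t k l m), 0,
      t k l (m+1) * t k (l+1) (m-1) / (t k (l+1) m * t k l m), 0;
      -(t (k+1) l m * t (k-1) l (m+1)) / (t k l (m+1) * t k l m),
      t k (l+1) m * t k (l-1) (m+1) / (t k l (m+1) * t k l m), 0, 0]

/-- The matrix Q of the matrix conservation law. -/
def matQ (t : ℤ → ℤ → ℤ → F) (k l m : ℤ) : Matrix (Fin 3) (Fin 4) F :=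
  !![ 0, -(t k (l+1) m * t (k+1) (l-1) m) / (t (k+1) l m * t k l m),
      t k l (m+1) * t (k+1) l (m-1) / (t (k+1) l m * t k l m), 0;
      0, -(t k (l+1) m * t (k+1) (l-1) (m+1)) / (t (k+1) l m * t k l (m+1)), 0,
      -(t k l m * t (k+1) l (m+1)) / (t (k+1) l m * t k l (m+1));
      t (k+1) l m * t (k-1) l (m+1) / (t k l (m+1) * t k l m),
      -(t k (l+1) m * t k (l-1) (m+1)) / (t k l (m+1) * t k l m), 0, 0]

/-- The matrix R of the matrix conservation law. -/
def matR (t : ℤ → ℤ → ℤ → F) (k l m : ℤ) : Matrix (Fin 3) (Fin 4) F :=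
  !![ 0, t k (l+1) m * t (k+1) (l-1) m / (t (k+1) l m * t k l m),
      -(t k l (m+1) * t (k+1) l (m-1)) / (t (k+1) l m * t k l m), 0;
      t (k+1) l m * t (k-1) (l+1) m / (t k (l+1) m * t k l m), 0,
      -(t k l (m+1) * t k (l+1) (m-1)) / (t k (l+1) m * t k l m), 0;
      0, 0, -(t k l (m+1) * t (k+1) (l+1) (m-1)) / (t (k+1) l m * t k (l+1) m),
      -(t (k+1) (l+1) m * t k l m) / (t (k+1) l m * t k (l+1) m)]

/-- The vector V. -/
def vecV (t : ℤ → ℤ → ℤ → F) (k l m : ℤ) : Fin 3 → F :=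
  ![t k (l+1) (m+1) * t (k+1) l m, t (k+1) l (m+1) * t k (l+1) m,
    t (k+1) (l+1) m * t k l (m+1)]

/-- The vector W of AKP conservation-law characteristics. -/
def vecW (t : ℤ → ℤ → ℤ → F) (k l m : ℤ) : Fin 4 → F :=
  ![t (k-1) (l+1) (m+1) / (t k (l+1) (m+1) * t k (l+1) m * t k l (m+1))
      - t (k+2) l m / (t (k+1) l m * t (k+1) (l+1) m * t (k+1) l (m+1)),
    t (k+1) (l-1) (m+1) / (t (k+1) l (m+1) * t (k+1) l m * t k l (m+1))
      - t k (l+2) m / (t k (l+1) m * t k (l+1) (m+1) * t (k+1) (l+1) m),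
    t (k+1) (l+1) (m-1) / (t (k+1) (l+1) m * t (k+1) l m * t k (l+1) m)
      - t k l (m+2) / (t k l (m+1) * t (k+1) l (m+1) * t k (l+1) (m+1)),
    t k l m / (t (k+1) l m * t k (l+1) m * t k l (m+1))
      - t (k+1) (l+1) (m+1) / (t (k+1) (l+1) m * t k (l+1) (m+1) * t (k+1) l (m+1))]

theorem matrix_conservation_law (t : ℤ → ℤ → ℤ → F)
    (ht : ∀ k l m : ℤ, t k l m ≠ 0) :
    ∀ k l m : ℤ,
      matP t (k+1) l m - matP t k l m + matQ t k (l+1) m - matQ t k l m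
        + matR t k l (m+1) - matR t k l m
      = Matrix.vecMulVec (vecV t k l m) (vecW t k l m) := by
  intro k l m
  have add_one_add_one : ∀ a : ℤ, a + 1 + 1 = a + 2 := fun a => by ring
  ext i j
  fin_cases i <;> fin_cases j <;>
    simp only [matP, matQ, matR, vecV, vecW, Matrix.vecMulVec_apply, Matrix.sub_apply,
      Matrix.add_apply, Matrix.of_apply, Matrix.cons_val, Fin.zero_eta, Fin.mk_one,
      Fin.reduceFinMk, add_sub_cancel_right, add_one_add_one] <;>
    field_simp [ht] <;>
    ring
end

section
/- If τ : ℤ³ → F is nowhere zero and satisfies the dual AKP equation with parameters a₁,…,a₄, then for each row i ∈ {1,2,3} the conservation law (Σⱼ aⱼPᵢⱼ)~ − Σⱼ aⱼPᵢⱼ + (Σⱼ aⱼQᵢⱼ)^ − Σⱼ aⱼQᵢⱼ + (Σⱼ aⱼRᵢⱼ)˙ − Σⱼ aⱼRᵢⱼ = 0 holds at every lattice point. -/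
variable {F : Type*} [Field F]

/-!
The matrix conservation law: the discrete divergence `P~ - P + Q^ - Q + R˙ - R` is the rank-one
matrix `V Wᵀ`, and `W ⬝ᵥ a` is the dual AKP expression divided by the six values of `τ` at the
neighbours of `(k, l, m)` in the unit cube. Contracting the matrix law with `a` turns row `i` of
the conservation law into `V i` times that quotient, which vanishes.
-/

open Matrix

theorem matPQR_divergence_eq_vecMulVec (t : ℤ → ℤ → ℤ → F) (ht : ∀ k l m, t k l m ≠ 0)
    (k l m : ℤ) :
    matP t (k+1) l m - matP t k l m + (matQ t k (l+1) m - matQ t k l m)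
      + (matR t k l (m+1) - matR t k l m) = vecMulVec (vecV t k l m) (vecW t k l m) := by
  ext i j
  fin_cases i <;> fin_cases j <;>
    simp only [Matrix.add_apply, vecMulVec_apply, matP, matQ, matR, vecV, vecW,
      of_sub_of, of_add_of, sub_cons, add_cons, head_cons, tail_cons, sub_self, zero_empty,
      empty_add_empty, add_zero, zero_add, add_sub_cancel_right, of_apply, cons_val', cons_val,
      cons_val_zero, cons_val_one, cons_val_fin_one, Pi.zero_apply, Fin.isValue, Fin.zero_eta,
      Fin.mk_one, Fin.reduceFinMk] <;>
    field_simp [ht] <;>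
    -- `ring_nf` rather than `ring`: it also identifies the shifted arguments `k+1+1` and `k+2`
    ring_nf

theorem vecW_dotProduct_eq_dualAKP_div (a : Fin 4 → F) (t : ℤ → ℤ → ℤ → F)
    (ht : ∀ k l m, t k l m ≠ 0) (k l m : ℤ) :
    vecW t k l m ⬝ᵥ a = dualAKP (a 0) (a 1) (a 2) (a 3) t k l m /
      (t (k+1) l m * t k (l+1) m * t k l (m+1) *
        t (k+1) (l+1) m * t (k+1) l (m+1) * t k (l+1) (m+1)) := by
  simp only [vecW, dualAKP, dotProduct, Fin.sum_univ_four, cons_val_zero, cons_val_one,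
    cons_val_two, cons_val_three, head_cons, tail_cons]
  field_simp [ht]

theorem dualAKP_three_conservation_laws (a : Fin 4 → F) (t : ℤ → ℤ → ℤ → F)
    (ht : ∀ k l m : ℤ, t k l m ≠ 0)
    (hD : ∀ k l m : ℤ, dualAKP (a 0) (a 1) (a 2) (a 3) t k l m = 0) :
    ∀ (i : Fin 3) (k l m : ℤ),
      let S : ℤ → ℤ → ℤ → F := fun k l m => ∑ j : Fin 4, a j * matP t k l m i j
      let T : ℤ → ℤ → ℤ → F := fun k l m => ∑ j : Fin 4, a j * matQ t k l m i j
      let U : ℤ → ℤ → ℤ → F := fun k l m => ∑ j : Fin 4, a j * matR t k l m i j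
      S (k+1) l m - S k l m + T k (l+1) m - T k l m + U k l (m+1) - U k l m = 0 := by
  intro i k l m S T U
  calc S (k+1) l m - S k l m + T k (l+1) m - T k l m + U k l (m+1) - U k l m
      = ((matP t (k+1) l m - matP t k l m + (matQ t k (l+1) m - matQ t k l m)
          + (matR t k l (m+1) - matR t k l m)) *ᵥ a) i := by
        simp only [S, T, U, mulVec, dotProduct, Matrix.add_apply, Matrix.sub_apply,
          Fin.sum_univ_four]
        ring
    _ = vecV t k l m i * (vecW t k l m ⬝ᵥ a) := by
        rw [matPQR_divergence_eq_vecMulVec t ht, vecMulVec_mulVec, Pi.smul_apply, op_smul_eq_mul]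
    _ = 0 := by rw [vecW_dotProduct_eq_dualAKP_div a t ht, hD, zero_div, mul_zero]
end

section
/- Setting the m-shift equal to the l-shift (i.e. considering τ independent of the difference of l and m appropriately) and with u = e, v = q̃, z = w = 0, a₁ + a₄ = 0, the Q³D difference equation a₁(û − ũ) + a₂(z̃ − ẑ) + a₃(w − ẇ) + a₄(v − v̇) = 0 together with the quotient relation ũ̂/ũ = ṽ/v̇ reduces to Rutishauser's QD algorithm: ẽ + q̃ = ê + q̃̂ and ê·q̂ = e·q̃. Precisely: if e, q : ℤ² → F (F a field, values of e, q nonzero) satisfy the two-variable system obtained from the Q³D system under the identification hat = dot, u = e, v = q̃, z = w = 0, a₁ = −a₄ = 1, a₂, a₃ arbitrary, then e and q satisfy ẽ + q̃ = ê + q̂̃ and ê q̂ = e q̃, and conversely. -/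
theorem sub_add_neg_one_mul_sub_eq_zero_iff {R : Type*} [CommRing R] (a b c d : R) :
    (a - b) + (-1 : R) * (c - d) = 0 ↔ b + c = a + d := by
  constructor <;> intro h <;> linear_combination -h

theorem Int.forall_add_one_iff {α : Sort*} (P : ℤ → α → Prop) :
    (∀ k l, P (k + 1) l) ↔ ∀ k l, P k l :=
  ⟨fun h k l => by simpa using h (k - 1) l, fun h k _ => h (k + 1) _⟩

theorem q3d_reduces_to_QD
    {F : Type*} [Field F] (e q : ℤ → ℤ → F)
    (he : ∀ k l : ℤ, e k l ≠ 0) (hq : ∀ k l : ℤ, q k l ≠ 0) :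
    (∀ k l : ℤ,
        (e k (l+1) - e (k+1) l) + (-1 : F) * (q (k+1) l - q (k+1) (l+1)) = 0 ∧
        e (k+1) (l+1) / e (k+1) l = q (k+2) l / q (k+1) (l+1)) ↔
    (∀ k l : ℤ,
        e (k+1) l + q (k+1) l = e k (l+1) + q (k+1) (l+1) ∧
        e k (l+1) * q k (l+1) = e k l * q (k+1) l) := by
  -- The quotient relation at `k` is the product rule of the QD algorithm at `k + 1`.
  have quotient_iff_product : ∀ k l : ℤ,
      e (k+1) (l+1) / e (k+1) l = q (k+2) l / q (k+1) (l+1) ↔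
        e (k+1) (l+1) * q (k+1) (l+1) = e (k+1) l * q (k+1+1) l := fun k l => by
    rw [div_eq_div_iff (he _ _) (hq _ _), add_assoc, one_add_one_eq_two, mul_comm (e _ l)]
  simp only [forall_and]
  exact and_congr (forall₂_congr fun _ _ => sub_add_neg_one_mul_sub_eq_zero_iff ..)
    ((forall₂_congr quotient_iff_product).trans
      (Int.forall_add_one_iff fun k l => e k (l+1) * q k (l+1) = e k l * q (k+1) l))
end

section
/- If τ : ℤ³ → F is nowhere zero, then the AKP conservation-law characteristic vector W and the vector V = (τ_{k,l+1,m+1}τ_{k+1,l,m}, τ_{k+1,l,m+1}τ_{k,l+1,m}, τ_{k+1,l+1,m}τ_{k,l,m+1}) satisfy: the AKP equation at (k,l,m) is equivalent to X·Vᵀ = 0 where X = (A,B,C), and the dual AKP equation at (k,l,m) is equivalent to W·wᵀ = 0 where w = (a₁,a₂,a₃,a₄); i.e., the identity W·wᵀ multiplied by τ̃τ̂τ̇τ̃̂τ̂̇τ̃̇ (the product of the six denominator factors) equals the left-hand side of the dual AKP equation up to the stated common factor. -/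
/-- The paper's `τ̃ τ̂ τ̇ τ̃̂ τ̂̇ τ̃̇`: the common denominator of the components of `W`. -/
def sixNeighbourProduct {F : Type*} [Field F] (t : ℤ → ℤ → ℤ → F) (k l m : ℤ) : F :=
  t (k+1) l m * t k (l+1) m * t k l (m+1) * t (k+1) (l+1) m * t k (l+1) (m+1) * t (k+1) l (m+1)

theorem sixNeighbourProduct_ne_zero {F : Type*} [Field F] {t : ℤ → ℤ → ℤ → F}
    (ht : ∀ k l m : ℤ, t k l m ≠ 0) (k l m : ℤ) : sixNeighbourProduct t k l m ≠ 0 := by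
  unfold sixNeighbourProduct
  simp only [mul_ne_zero_iff]
  exact ⟨⟨⟨⟨⟨ht _ _ _, ht _ _ _⟩, ht _ _ _⟩, ht _ _ _⟩, ht _ _ _⟩, ht _ _ _⟩

theorem dualAKP_eq_mul_sixNeighbourProduct {F : Type*} [Field F] (a1 a2 a3 a4 : F)
    {t : ℤ → ℤ → ℤ → F} (ht : ∀ k l m : ℤ, t k l m ≠ 0) (k l m : ℤ) :
    dualAKP a1 a2 a3 a4 t k l m =
      (a1 * (t (k-1) (l+1) (m+1) / (t k (l+1) (m+1) * t k (l+1) m * t k l (m+1))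
          - t (k+2) l m / (t (k+1) l m * t (k+1) (l+1) m * t (k+1) l (m+1)))
        + a2 * (t (k+1) (l-1) (m+1) / (t (k+1) l (m+1) * t (k+1) l m * t k l (m+1))
          - t k (l+2) m / (t k (l+1) m * t k (l+1) (m+1) * t (k+1) (l+1) m))
        + a3 * (t (k+1) (l+1) (m-1) / (t (k+1) (l+1) m * t (k+1) l m * t k (l+1) m)
          - t k l (m+2) / (t k l (m+1) * t (k+1) l (m+1) * t k (l+1) (m+1)))
        + a4 * (t k l m / (t (k+1) l m * t k (l+1) m * t k l (m+1))
          - t (k+1) (l+1) (m+1) / (t (k+1) (l+1) m * t k (l+1) (m+1) * t (k+1) l (m+1))))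
      * sixNeighbourProduct t k l m := by
  unfold dualAKP sixNeighbourProduct
  field_simp [ht]

theorem akp_and_dualAKP_via_V_and_W
    {F : Type*} [Field F] (A B C a1 a2 a3 a4 : F) (t : ℤ → ℤ → ℤ → F)
    (ht : ∀ k l m : ℤ, t k l m ≠ 0) :
    ∀ k l m : ℤ,
      let V1 : F := t k (l+1) (m+1) * t (k+1) l m
      let V2 : F := t (k+1) l (m+1) * t k (l+1) m
      let V3 : F := t (k+1) (l+1) m * t k l (m+1)
      let W1 : F := t (k-1) (l+1) (m+1) / (t k (l+1) (m+1) * t k (l+1) m * t k l (m+1))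
          - t (k+2) l m / (t (k+1) l m * t (k+1) (l+1) m * t (k+1) l (m+1))
      let W2 : F := t (k+1) (l-1) (m+1) / (t (k+1) l (m+1) * t (k+1) l m * t k l (m+1))
          - t k (l+2) m / (t k (l+1) m * t k (l+1) (m+1) * t (k+1) (l+1) m)
      let W3 : F := t (k+1) (l+1) (m-1) / (t (k+1) (l+1) m * t (k+1) l m * t k (l+1) m)
          - t k l (m+2) / (t k l (m+1) * t (k+1) l (m+1) * t k (l+1) (m+1))
      let W4 : F := t k l m / (t (k+1) l m * t k (l+1) m * t k l (m+1))
          - t (k+1) (l+1) (m+1) / (t (k+1) (l+1) m * t k (l+1) (m+1) * t (k+1) l (m+1))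
      ((A * (t (k+1) l m * t k (l+1) (m+1)) + B * (t k (l+1) m * t (k+1) l (m+1))
          + C * (t k l (m+1) * t (k+1) (l+1) m) = 0)
        ↔ A * V1 + B * V2 + C * V3 = 0) ∧
      ((dualAKP a1 a2 a3 a4 t k l m = 0)
        ↔ a1 * W1 + a2 * W2 + a3 * W3 + a4 * W4 = 0) := by
  intro k l m
  refine ⟨Iff.of_eq (congrArg (· = 0) (by ring)), ?_⟩
  rw [dualAKP_eq_mul_sixNeighbourProduct a1 a2 a3 a4 ht, mul_eq_zero,
    or_iff_left (sixNeighbourProduct_ne_zero ht k l m)]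
end
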